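/- arXiv:2401.07494 — 4 statements merged into one kernel-verified Lean document; each statement's English description precedes it below -/
import Mathlib

section
/- Let A be an m×n real matrix with largest singular value (spectral norm) at most 1. Let B be the matrix obtained from A by replacing every negative entry with 0. Then the spectral norm of B is at most √(rank A). -/
/-!
Passing to the positive part does not increase any entry in absolute value, so
`‖B‖ ≤ ‖B‖_F ≤ ‖A‖_F`. The squared Frobenius norm `‖A‖_F² = tr (Aᴴ A)` is the sum of the
eigenvalues of `Aᴴ A`; exactly `rank A` of them are nonzero and each is at most `‖Aᴴ A‖ = ‖A‖² ≤ 1`.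
-/

noncomputable def matSpectralNorm {m n : ℕ} (A : Matrix (Fin m) (Fin n) ℝ) : ℝ :=
  ‖LinearMap.toContinuousLinearMap (Matrix.toEuclideanLin A)‖

open Finset
open scoped Matrix.Norms.L2Operator ComplexOrder

namespace Matrix

variable {𝕜 m n : Type*} [RCLike 𝕜] [Fintype m] [Fintype n]

lemma IsHermitian.abs_eigenvalues_le_l2_opNorm [DecidableEq n] {H : Matrix n n 𝕜}
    (hH : H.IsHermitian) (i : n) : |hH.eigenvalues i| ≤ ‖H‖ := by
  have : Nonempty n := ⟨i⟩
  have hmem : (hH.eigenvalues i : 𝕜) ∈ spectrum 𝕜 H :=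
    (spectrum.algebraMap_mem_iff 𝕜).mpr (hH.eigenvalues_mem_spectrum_real i)
  simpa using spectrum.norm_le_norm_of_mem hmem

lemma l2_opNorm_le_sqrt_sum_norm_sq [DecidableEq n] (A : Matrix m n 𝕜) :
    ‖A‖ ≤ √(∑ i, ∑ j, ‖A i j‖ ^ 2) := by
  rw [l2_opNorm_def]
  refine ContinuousLinearMap.opNorm_le_bound _ (Real.sqrt_nonneg _) fun x => ?_
  have hrow (i : m) : ‖(A *ᵥ x.ofLp) i‖ ^ 2 ≤ (∑ j, ‖A i j‖ ^ 2) * ∑ j, ‖x j‖ ^ 2 :=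
    calc ‖(A *ᵥ x.ofLp) i‖ ^ 2 ≤ (∑ j, ‖A i j‖ * ‖x j‖) ^ 2 := by
          gcongr
          exact (norm_sum_le _ _).trans_eq (by simp [norm_mul])
      _ ≤ _ := sum_mul_sq_le_sq_mul_sq _ _ _
  simp only [EuclideanSpace.norm_eq]
  rw [← Real.sqrt_mul (by positivity), sum_mul]
  exact Real.sqrt_le_sqrt (sum_le_sum fun i _ => hrow i)

lemma re_trace_conjTranspose_mul_self (A : Matrix m n 𝕜) :
    RCLike.re (Aᴴ * A).trace = ∑ i, ∑ j, ‖A i j‖ ^ 2 := by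
  rw [sum_comm]
  simp [trace, mul_apply, RCLike.conj_mul]

lemma sum_norm_sq_le_rank_mul_l2_opNorm_sq [DecidableEq n] (A : Matrix m n 𝕜) :
    ∑ i, ∑ j, ‖A i j‖ ^ 2 ≤ A.rank * ‖A‖ ^ 2 := by
  have hH : (Aᴴ * A).IsHermitian := isHermitian_conjTranspose_mul_self A
  have heig (i : n) : hH.eigenvalues i ≤ ‖A‖ ^ 2 := by
    rw [sq, ← l2_opNorm_conjTranspose_mul_self]
    exact (le_abs_self _).trans (hH.abs_eigenvalues_le_l2_opNorm i)
  have hrank : A.rank = #{i | hH.eigenvalues i ≠ 0} := by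
    rw [← rank_conjTranspose_mul_self, hH.rank_eq_card_non_zero_eigs, Fintype.card_subtype]
  calc ∑ i, ∑ j, ‖A i j‖ ^ 2 = ∑ i, hH.eigenvalues i := by
        rw [← re_trace_conjTranspose_mul_self, hH.trace_eq_sum_eigenvalues]
        simp
    _ = ∑ i with hH.eigenvalues i ≠ 0, hH.eigenvalues i := (sum_filter_ne_zero _).symm
    _ ≤ ∑ i with hH.eigenvalues i ≠ 0, ‖A‖ ^ 2 := sum_le_sum fun i _ => heig i
    _ = A.rank * ‖A‖ ^ 2 := by rw [sum_const, nsmul_eq_mul, hrank]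

end Matrix

theorem stmt_0 {m n : ℕ} (A : Matrix (Fin m) (Fin n) ℝ)
    (hA : matSpectralNorm A ≤ 1)
    (B : Matrix (Fin m) (Fin n) ℝ)
    (hB : ∀ i j, B i j = max (A i j) 0) :
    matSpectralNorm B ≤ Real.sqrt (A.rank) := by
  replace hA : ‖A‖ ≤ 1 := hA
  have hentry (i j) : ‖B i j‖ ≤ ‖A i j‖ := by
    simpa [hB] using abs_max_sub_max_le_abs (A i j) 0 0
  calc matSpectralNorm B ≤ √(∑ i, ∑ j, ‖B i j‖ ^ 2) := B.l2_opNorm_le_sqrt_sum_norm_sq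
    _ ≤ √(∑ i, ∑ j, ‖A i j‖ ^ 2) := by gcongr with i _ j _; exact hentry i j
    _ ≤ √(A.rank * ‖A‖ ^ 2) := Real.sqrt_le_sqrt A.sum_norm_sq_le_rank_mul_l2_opNorm_sq
    _ ≤ √(A.rank) := by
        gcongr
        exact mul_le_of_le_one_right (Nat.cast_nonneg _) (pow_le_one₀ (norm_nonneg _) hA)
end

section
/- Let A be an m×n real matrix with largest singular value at most 1. Let B be the matrix obtained from A by replacing every negative entry with 0. Then the spectral norm of B is at most √(min(m,n)). -/
open Matrix

section

variable {m n : ℕ}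

theorem matSpectralNorm_nonneg (M : Matrix (Fin m) (Fin n) ℝ) : 0 ≤ matSpectralNorm M :=
  norm_nonneg _

-- `matSpectralNorm` is definitionally Mathlib's L2 operator norm, and over `ℝ` the conjugate
-- transpose is the transpose.
open scoped Matrix.Norms.L2Operator in
theorem matSpectralNorm_transpose (M : Matrix (Fin m) (Fin n) ℝ) :
    matSpectralNorm Mᵀ = matSpectralNorm M :=
  l2_opNorm_conjTranspose M

theorem sum_sq_apply_le_matSpectralNorm_sq (M : Matrix (Fin m) (Fin n) ℝ) (j : Fin n) :
    ∑ i, M i j ^ 2 ≤ matSpectralNorm M ^ 2 := by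
  have h := (LinearMap.toContinuousLinearMap (toEuclideanLin M)).le_opNorm
    (EuclideanSpace.single j 1)
  have hcol : toEuclideanLin M (EuclideanSpace.single j 1) = WithLp.toLp 2 (fun i => M i j) := by
    ext i
    exact congrFun (mulVec_single_one M j) i
  rw [PiLp.norm_single, norm_one, mul_one, LinearMap.coe_toContinuousLinearMap', hcol] at h
  calc ∑ i, M i j ^ 2 = ‖WithLp.toLp 2 (fun i => M i j)‖ ^ 2 := by
        simp [EuclideanSpace.norm_sq_eq]
    _ ≤ matSpectralNorm M ^ 2 := pow_le_pow_left₀ (norm_nonneg _) h 2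

theorem sum_sum_sq_le_card_mul_matSpectralNorm_sq (M : Matrix (Fin m) (Fin n) ℝ) :
    ∑ i, ∑ j, M i j ^ 2 ≤ n * matSpectralNorm M ^ 2 := by
  rw [Finset.sum_comm]
  simpa using Finset.sum_le_sum fun j (_ : j ∈ Finset.univ) =>
    sum_sq_apply_le_matSpectralNorm_sq M j

theorem sum_sum_sq_le_min_mul_matSpectralNorm_sq (M : Matrix (Fin m) (Fin n) ℝ) :
    ∑ i, ∑ j, M i j ^ 2 ≤ min (m : ℝ) n * matSpectralNorm M ^ 2 := by
  have hrows := sum_sum_sq_le_card_mul_matSpectralNorm_sq Mᵀ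
  rw [matSpectralNorm_transpose, Finset.sum_comm] at hrows
  rw [min_mul_of_nonneg _ _ (sq_nonneg _)]
  exact le_min hrows (sum_sum_sq_le_card_mul_matSpectralNorm_sq M)

theorem matSpectralNorm_le_sqrt_sum_sum_sq (M : Matrix (Fin m) (Fin n) ℝ) :
    matSpectralNorm M ≤ √(∑ i, ∑ j, M i j ^ 2) := by
  refine ContinuousLinearMap.opNorm_le_bound _ (Real.sqrt_nonneg _) fun x => ?_
  have hrow (i : Fin m) : (∑ j, M i j * x j) ^ 2 ≤ (∑ j, M i j ^ 2) * ∑ j, x j ^ 2 :=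
    Finset.sum_mul_sq_le_sq_mul_sq Finset.univ (M i) x
  calc ‖toEuclideanLin M x‖ = √(∑ i, (∑ j, M i j * x j) ^ 2) := by
        simp [EuclideanSpace.norm_eq, mulVec, dotProduct]
    _ ≤ √((∑ i, ∑ j, M i j ^ 2) * ∑ j, x j ^ 2) := by
        rw [Finset.sum_mul]
        exact Real.sqrt_le_sqrt (Finset.sum_le_sum fun i _ => hrow i)
    _ = √(∑ i, ∑ j, M i j ^ 2) * ‖x‖ := by
        rw [Real.sqrt_mul (by positivity), EuclideanSpace.norm_eq]
        simp

theorem matSpectralNorm_le_sqrt_min_mul_of_sq_le {A B : Matrix (Fin m) (Fin n) ℝ}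
    (h : ∀ i j, B i j ^ 2 ≤ A i j ^ 2) :
    matSpectralNorm B ≤ √(min m n) * matSpectralNorm A := by
  calc matSpectralNorm B ≤ √(∑ i, ∑ j, B i j ^ 2) := matSpectralNorm_le_sqrt_sum_sum_sq B
    _ ≤ √(∑ i, ∑ j, A i j ^ 2) :=
        Real.sqrt_le_sqrt (Finset.sum_le_sum fun i _ => Finset.sum_le_sum fun j _ => h i j)
    _ ≤ √(min (m : ℝ) n * matSpectralNorm A ^ 2) :=
        Real.sqrt_le_sqrt (sum_sum_sq_le_min_mul_matSpectralNorm_sq A)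
    _ = √(min m n) * matSpectralNorm A := by
        rw [Real.sqrt_mul (by positivity), Real.sqrt_sq (matSpectralNorm_nonneg A)]

end

theorem max_zero_sq_le {R : Type*} [Ring R] [LinearOrder R] [IsStrictOrderedRing R] (a : R) :
    max a 0 ^ 2 ≤ a ^ 2 := by
  simpa only [sq_abs] using
    pow_le_pow_left₀ (le_max_right a 0) (max_le (le_abs_self a) (abs_nonneg a)) 2

theorem stmt_1 {m n : ℕ} (A : Matrix (Fin m) (Fin n) ℝ)
    (hA : matSpectralNorm A ≤ 1)
    (B : Matrix (Fin m) (Fin n) ℝ)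
    (hB : ∀ i j, B i j = max (A i j) 0) :
    matSpectralNorm B ≤ Real.sqrt (min m n) := by
  have hBA : ∀ i j, B i j ^ 2 ≤ A i j ^ 2 := fun i j => hB i j ▸ max_zero_sq_le (A i j)
  calc matSpectralNorm B ≤ √(min m n) * matSpectralNorm A :=
        matSpectralNorm_le_sqrt_min_mul_of_sq_le hBA
    _ ≤ √(min m n) := mul_le_of_le_one_right (Real.sqrt_nonneg _) hA
end

section
/- Consider a one-layer recurrent map h_t = ReLU(Wˣ x_t + Wʰ h_{t−1} + b) over T time steps with h₀ fixed, where Wˣ, Wʰ have nonnegative entries. Then for each t and each coordinate i, the map (x₁, …, x_T) ↦ (h_t)ᵢ is convex as a function of the concatenated input sequence. -/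
/-- Hidden states of a one-layer ReLU recurrent network:
`h 0 = h₀`, `h (t+1) i = ReLU ((Wˣ x_{t+1})ᵢ + (Wʰ h_t)ᵢ + bᵢ)`. -/
def rnnHidden {m n : ℕ} (Wx : Matrix (Fin m) (Fin n) ℝ) (Wh : Matrix (Fin m) (Fin m) ℝ)
    (b h0 : Fin m → ℝ) (x : ℕ → Fin n → ℝ) : ℕ → Fin m → ℝ
  | 0 => h0
  | t + 1 => fun i =>
      max ((∑ j, Wx i j * x (t + 1) j) + (∑ j, Wh i j * rnnHidden Wx Wh b h0 x t j) + b i) 0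

theorem ConvexOn.sum {𝕜 E β ι : Type*} [Semiring 𝕜] [PartialOrder 𝕜] [AddCommMonoid E]
    [AddCommMonoid β] [PartialOrder β] [IsOrderedAddMonoid β] [SMul 𝕜 E] [Module 𝕜 β]
    {s : Set E} (hs : Convex 𝕜 s) {t : Finset ι} {f : ι → E → β}
    (hf : ∀ i ∈ t, ConvexOn 𝕜 s (f i)) : ConvexOn 𝕜 s fun x => ∑ i ∈ t, f i x := by
  simpa only [← Finset.sum_apply] using
    Finset.sum_induction f (ConvexOn 𝕜 s) (fun _ _ => ConvexOn.add) (convexOn_const 0 hs) hf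

theorem stmt_14_general {m n : ℕ} (Wx : Matrix (Fin m) (Fin n) ℝ) (Wh : Matrix (Fin m) (Fin m) ℝ)
    (b h0 : Fin m → ℝ)
    (hWh : ∀ i j, 0 ≤ Wh i j) :
    ∀ (t : ℕ) (i : Fin m),
      ConvexOn ℝ Set.univ (fun x : ℕ → Fin n → ℝ => rnnHidden Wx Wh b h0 x t i) := by
  intro t
  induction t with
  | zero => exact fun i => convexOn_const _ convex_univ
  | succ t ih =>
    intro i
    have input : ConvexOn ℝ Set.univ fun x : ℕ → Fin n → ℝ => ∑ j, Wx i j * x (t + 1) j :=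
      (LinearMap.proj i ∘ₗ Wx.mulVecLin ∘ₗ
        LinearMap.proj (R := ℝ) (φ := fun _ : ℕ => Fin n → ℝ) (t + 1)).convexOn convex_univ
    have recurrent : ConvexOn ℝ Set.univ
        fun x => ∑ j, Wh i j * rnnHidden Wx Wh b h0 x t j :=
      ConvexOn.sum convex_univ fun j _ => (ih j).smul (hWh i j)
    exact ((input.add recurrent).add_const (b i)).sup (convexOn_const 0 convex_univ)

theorem stmt_14 {m n : ℕ} (Wx : Matrix (Fin m) (Fin n) ℝ) (Wh : Matrix (Fin m) (Fin m) ℝ)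
    (b h0 : Fin m → ℝ)
    (hWx : ∀ i j, 0 ≤ Wx i j) (hWh : ∀ i j, 0 ≤ Wh i j) :
    ∀ (t : ℕ) (i : Fin m),
      ConvexOn ℝ Set.univ (fun x : ℕ → Fin n → ℝ => rnnHidden Wx Wh b h0 x t i) :=
  stmt_14_general Wx Wh b h0 hWh
end

section
/- The softmax function from ℝⁿ to ℝⁿ, defined by softmax(x)ᵢ = exp(xᵢ)/Σⱼ exp(xⱼ), is Lipschitz continuous with Lipschitz constant at most 1 with respect to the Euclidean norm. -/
/-!
By the mean value inequality it suffices to bound the Jacobian of softmax at every point by 1 in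
operator norm. With `p = softmax x`, a probability vector, the Jacobian is `diag p - p pᵀ`; its
value at `v` has coordinates `p i * (v i - m)`, where `m = ∑ j, p j * v j`. Since `p i ≤ 1`,
the squared norm of this vector is at most `∑ i, p i * (v i - m) ^ 2 = ∑ i, p i * v i ^ 2 - m ^ 2`,
a variance, which is at most `∑ i, v i ^ 2`.
-/

noncomputable def softmax {n : ℕ} (x : EuclideanSpace ℝ (Fin n)) : EuclideanSpace ℝ (Fin n) :=
  WithLp.toLp 2 (fun i => Real.exp (x i) / ∑ j, Real.exp (x j))

open Finset Matrix

section ProbabilityVector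

variable {ι : Type*} [Fintype ι] {p : ι → ℝ}

theorem sum_sq_mul_sub_weightedMean_le (hp : ∀ i, 0 ≤ p i) (hsum : ∑ i, p i = 1) (v : ι → ℝ) :
    ∑ i, (p i * (v i - ∑ j, p j * v j)) ^ 2 ≤ ∑ i, v i ^ 2 := by
  set m := ∑ j, p j * v j
  have hp_le_one (i : ι) : p i ≤ 1 := hsum ▸ single_le_sum (fun j _ => hp j) (mem_univ i)
  have variance_eq : ∑ i, p i * (v i - m) ^ 2 = ∑ i, p i * v i ^ 2 - m ^ 2 := by
    calc ∑ i, p i * (v i - m) ^ 2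
        = ∑ i, p i * v i ^ 2 - 2 * m * ∑ i, p i * v i + m ^ 2 * ∑ i, p i := by
          simp only [mul_sum, ← sum_sub_distrib, ← sum_add_distrib]
          exact sum_congr rfl fun i _ => by ring
      _ = ∑ i, p i * v i ^ 2 - m ^ 2 := by rw [hsum]; ring
  calc ∑ i, (p i * (v i - m)) ^ 2
      ≤ ∑ i, p i * (v i - m) ^ 2 := sum_le_sum fun i _ => by
        rw [mul_pow, sq (p i)]
        exact mul_le_mul_of_nonneg_right (mul_le_of_le_one_left (hp i) (hp_le_one i)) (sq_nonneg _)
    _ ≤ ∑ i, p i * v i ^ 2 := by linarith [variance_eq, sq_nonneg m]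
    _ ≤ ∑ i, v i ^ 2 := sum_le_sum fun i _ => mul_le_of_le_one_left (sq_nonneg _) (hp_le_one i)

theorem norm_toEuclideanCLM_diagonal_sub_vecMulVec_le_one [DecidableEq ι]
    (hp : ∀ i, 0 ≤ p i) (hsum : ∑ i, p i = 1) :
    ‖toEuclideanCLM (𝕜 := ℝ) (diagonal p - vecMulVec p p)‖ ≤ 1 := by
  refine ContinuousLinearMap.opNorm_le_bound _ zero_le_one fun v => ?_
  rw [one_mul, EuclideanSpace.norm_eq, EuclideanSpace.norm_eq]
  refine Real.sqrt_le_sqrt ?_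
  simp only [Real.norm_eq_abs, sq_abs, ofLp_toEuclideanCLM]
  convert sum_sq_mul_sub_weightedMean_le hp hsum v using 3 with i
  simp [sub_mulVec, mulVec_diagonal, vecMulVec_mulVec, mul_sub, dotProduct, mul_comm]

end ProbabilityVector

theorem sum_exp_pos {ι : Type*} [Fintype ι] [Nonempty ι] (f : ι → ℝ) :
    0 < ∑ j, Real.exp (f j) :=
  sum_pos (fun _ _ => Real.exp_pos _) univ_nonempty

section Softmax

variable {n : ℕ}

theorem softmax_apply (x : EuclideanSpace ℝ (Fin n)) (i : Fin n) :
    softmax x i = Real.exp (x i) / ∑ j, Real.exp (x j) := rfl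

theorem softmax_nonneg (x : EuclideanSpace ℝ (Fin n)) (i : Fin n) : 0 ≤ softmax x i :=
  div_nonneg (Real.exp_pos _).le (sum_nonneg fun _ _ => (Real.exp_pos _).le)

theorem sum_softmax [NeZero n] (x : EuclideanSpace ℝ (Fin n)) : ∑ i, softmax x i = 1 := by
  simp only [softmax_apply, ← sum_div, div_self (sum_exp_pos _).ne']

theorem softmax_apply_eq_exp_sub_log [NeZero n] (x : EuclideanSpace ℝ (Fin n)) (i : Fin n) :
    softmax x i = Real.exp (x i - Real.log (∑ j, Real.exp (x j))) := by
  rw [Real.exp_sub, Real.exp_log (sum_exp_pos _), softmax_apply]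

theorem hasFDerivAt_softmax [NeZero n] (x : EuclideanSpace ℝ (Fin n)) :
    HasFDerivAt softmax
      (toEuclideanCLM (𝕜 := ℝ) (diagonal (softmax x) - vecMulVec (softmax x) (softmax x))) x := by
  rw [← hasFDerivWithinAt_univ, hasFDerivWithinAt_piLp]
  intro i
  rw [hasFDerivWithinAt_univ, funext fun y => softmax_apply_eq_exp_sub_log y i]
  have hsum : HasFDerivAt (fun y : EuclideanSpace ℝ (Fin n) => ∑ j, Real.exp (y j))
      (∑ j, Real.exp (x j) • EuclideanSpace.proj j) x :=
    HasFDerivAt.fun_sum fun j _ => (PiLp.hasFDerivAt_apply 2 x j).exp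
  refine (((PiLp.hasFDerivAt_apply 2 x i).fun_sub
    (hsum.log (sum_exp_pos _).ne')).exp).congr_fderiv ?_
  rw [← softmax_apply_eq_exp_sub_log]
  ext v
  simp [mulVec_diagonal, vecMulVec_mulVec, mul_sub, dotProduct, softmax_apply, mul_sum, mul_comm,
    mul_left_comm, mul_assoc]

end Softmax

theorem stmt_18 {n : ℕ} : LipschitzWith 1 (softmax (n := n)) := by
  cases n with
  | zero => exact LipschitzWith.of_dist_le_mul fun x y => by simp [Subsingleton.elim x y]
  | succ n =>
    refine lipschitzWith_of_nnnorm_fderiv_le (𝕜 := ℝ)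
      (fun x => (hasFDerivAt_softmax x).differentiableAt) fun x => ?_
    rw [(hasFDerivAt_softmax x).fderiv, ← NNReal.coe_le_coe, coe_nnnorm]
    exact norm_toEuclideanCLM_diagonal_sub_vecMulVec_le_one (softmax_nonneg x) (sum_softmax x)
end
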